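/- arXiv:2001.11896 — 2 statements merged into one kernel-verified Lean document; each statement's English description precedes it below -/
import Mathlib

section
/- Let C be an n×n real symmetric positive-definite matrix, let s be an integer with 1 ≤ s ≤ n, let x ∈ ℝⁿ and let X be an n×n real symmetric matrix such that X − xxᵀ is positive semidefinite and X_{ii} = x_i for all i. Define φ(ψ) := log det F(ψ) − s·ψ with F(ψ) := e^ψ (C ∘ X) + I − diag(x). Then for every ψ ∈ ℝ, φ is differentiable at ψ with derivative φ′(ψ) = n − s − trace( F(ψ)⁻¹ (I − diag(x)) ). -/
/-!
Write `X = (X - x xᵀ) + x xᵀ` and note `C ∘ x xᵀ = diag(x) C diag(x)`. Then `F(ψ)` is the sum of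
`e^ψ C ∘ (X - x xᵀ)`, positive semidefinite by the Schur product theorem, and
`e^ψ diag(x) C diag(x) + diag(1 - x)`, which is positive definite: both terms are positive
semidefinite since `x_i - x_i² = (X - x xᵀ)_{ii} ≥ 0`, and a common null vector `v` satisfies
`x_i v_i = 0 = (1 - x_i) v_i`. So `F(ψ)` is invertible, and Jacobi's formula
`d/dt det(F + t A) = det F · tr(F⁻¹ A)` at `t = 0`, with `A = C ∘ X`, gives
`φ'(ψ) = tr(F⁻¹ e^ψ A) - s = tr(I - F⁻¹ (I - diag x)) - s`.
-/

open Matrix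

namespace Matrix

variable {ι : Type*} [Fintype ι] [DecidableEq ι]

theorem hadamard_vecMulVec {α : Type*} [CommSemiring α] (A : Matrix ι ι α) (x y : ι → α) :
    A ⊙ vecMulVec x y = diagonal x * A * diagonal y := by
  ext i j
  simp only [hadamard_apply, vecMulVec_apply, mul_diagonal, diagonal_mul]
  ring

theorem posDef_smul_diagonal_mul_mul_diagonal_add_diagonal {C : Matrix ι ι ℝ} (hC : C.PosDef)
    {c : ℝ} (hc : 0 < c) {x : ι → ℝ} (hx : ∀ i, x i ≤ 1) :
    (c • (diagonal x * C * diagonal x) + diagonal (1 - x)).PosDef := by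
  have hP : (c • (diagonal x * C * diagonal x)).PosSemidef := by
    simpa using (hC.posSemidef.conjTranspose_mul_mul_same (diagonal x)).smul hc.le
  have hQ : (diagonal (1 - x)).PosSemidef :=
    PosSemidef.diagonal fun i => sub_nonneg.2 (hx i)
  refine PosDef.of_dotProduct_mulVec_pos (hP.add hQ).isHermitian fun v hv => ?_
  contrapose! hv
  rw [add_mulVec, dotProduct_add] at hv
  have hP0 := hP.dotProduct_mulVec_nonneg v
  have hQ0 := hQ.dotProduct_mulVec_nonneg v
  have hxv : diagonal x *ᵥ v = 0 := by
    by_contra hne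
    have hpos := mul_pos hc (hC.dotProduct_mulVec_pos hne)
    have hquad : star v ⬝ᵥ (c • (diagonal x * C * diagonal x)) *ᵥ v
        = c * (star (diagonal x *ᵥ v) ⬝ᵥ C *ᵥ (diagonal x *ᵥ v)) := by
      rw [smul_mulVec, dotProduct_smul, smul_eq_mul, star_mulVec, ← dotProduct_mulVec,
        mulVec_mulVec, mulVec_mulVec, diagonal_conjTranspose]
      simp only [star_trivial]
    linarith
  have hxv' : diagonal (1 - x) *ᵥ v = 0 :=
    (hQ.dotProduct_mulVec_zero_iff v).1 (by linarith)
  funext i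
  have h1 := congrFun hxv i
  have h2 := congrFun hxv' i
  simp only [mulVec_diagonal, Pi.sub_apply, Pi.one_apply, Pi.zero_apply] at h1 h2 ⊢
  linear_combination h1 + h2

theorem posDef_smul_hadamard_add_one_sub_diagonal {C X : Matrix ι ι ℝ} (hC : C.PosDef)
    {x : ι → ℝ} (hpsd : (X - vecMulVec x x).PosSemidef) (hdiag : ∀ i, X i i = x i)
    {c : ℝ} (hc : 0 < c) :
    (c • (C ⊙ X) + (1 - diagonal x)).PosDef := by
  have hx : ∀ i, x i ≤ 1 := fun i => by
    have hii := hpsd.diag_nonneg (i := i)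
    simp only [sub_apply, vecMulVec_apply, hdiag] at hii
    nlinarith
  have hsplit : c • (C ⊙ X) + (1 - diagonal x) = c • (C ⊙ (X - vecMulVec x x))
      + (c • (diagonal x * C * diagonal x) + diagonal (1 - x)) := by
    conv_lhs => rw [← sub_add_cancel X (vecMulVec x x)]
    rw [hadamard_add, hadamard_vecMulVec, smul_add, ← diagonal_one, diagonal_sub]
    abel
  rw [hsplit]
  exact PosDef.posSemidef_add ((hC.posSemidef.hadamard hpsd).smul hc.le)
    (posDef_smul_diagonal_mul_mul_diagonal_add_diagonal hC hc hx)

theorem hasDerivAt_det_one_add_smul {𝕜 : Type*} [NontriviallyNormedField 𝕜]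
    (M : Matrix ι ι 𝕜) : HasDerivAt (fun r : 𝕜 => (1 + r • M).det) M.trace 0 := by
  have hP := (det (1 + (Polynomial.X : Polynomial 𝕜) • M.map Polynomial.C)).hasDerivAt 0
  rw [derivative_det_one_add_X_smul] at hP
  convert hP using 2 with r
  rw [← Polynomial.coe_evalRingHom, RingHom.map_det]
  congr 1
  ext i j
  simp only [add_apply, one_apply, smul_apply, smul_eq_mul, RingHom.mapMatrix_apply, map_apply,
    Polynomial.coe_evalRingHom, Polynomial.X_mul_C, Polynomial.eval_add, Polynomial.eval_mul,
    Polynomial.eval_C, Polynomial.eval_X, apply_ite, Polynomial.eval_one, Polynomial.eval_zero]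
  ring

theorem hasDerivAt_det_add_smul {𝕜 : Type*} [NontriviallyNormedField 𝕜]
    {M : Matrix ι ι 𝕜} (hM : IsUnit M.det) (A : Matrix ι ι 𝕜) :
    HasDerivAt (fun r : 𝕜 => (M + r • A).det) (M.det * (M⁻¹ * A).trace) 0 := by
  have hfactor : ∀ r : 𝕜, M + r • A = M * (1 + r • (M⁻¹ * A)) := fun r => by
    rw [Matrix.mul_add, Matrix.mul_one, Matrix.mul_smul, ← Matrix.mul_assoc,
      mul_nonsing_inv _ hM, Matrix.one_mul]
  simpa only [hfactor, det_mul] using (hasDerivAt_det_one_add_smul (M⁻¹ * A)).const_mul M.det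

theorem hasDerivAt_log_det_exp_smul_add {A B : Matrix ι ι ℝ} {ψ : ℝ}
    (hF : (Real.exp ψ • A + B).det ≠ 0) :
    HasDerivAt (fun t => Real.log (Real.exp t • A + B).det)
      (Fintype.card ι - ((Real.exp ψ • A + B)⁻¹ * B).trace) ψ := by
  set F := Real.exp ψ • A + B with hFdef
  have hshift : ∀ t, Real.exp t • A + B = F + (Real.exp t - Real.exp ψ) • A := fun t => by
    rw [hFdef, sub_smul]; abel
  have hexp : HasDerivAt (fun t => Real.exp t - Real.exp ψ) (Real.exp ψ) ψ :=
    (Real.hasDerivAt_exp ψ).sub_const _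
  have hdet := (hasDerivAt_det_add_smul (isUnit_iff_ne_zero.2 hF) A).comp_of_eq ψ hexp
    (sub_self _).symm
  have hlog := hdet.log (by simpa [Function.comp_def] using hF)
  simp only [Function.comp_def, ← hshift] at hlog
  rw [← hFdef] at hlog
  have htrace : (F⁻¹ * A).trace * Real.exp ψ = Fintype.card ι - (F⁻¹ * B).trace := by
    rw [mul_comm, ← smul_eq_mul, ← trace_smul, ← Matrix.mul_smul,
      show Real.exp ψ • A = F - B from (add_sub_cancel_right _ _).symm, Matrix.mul_sub,
      nonsing_inv_mul _ (isUnit_iff_ne_zero.2 hF), trace_sub, trace_one]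
  rwa [mul_assoc, mul_div_cancel_left₀ _ hF, htrace] at hlog

end Matrix

theorem stmt_11_general (n : ℕ) (C : Matrix (Fin n) (Fin n) ℝ) (hC : C.PosDef)
    (s : ℕ)
    (x : Fin n → ℝ) (X : Matrix (Fin n) (Fin n) ℝ)
    (hpsd : (X - vecMulVec x x).PosSemidef) (hdiag : ∀ i, X i i = x i)
    (ψ : ℝ) :
    HasDerivAt (fun t : ℝ =>
        Real.log (Real.exp t • (C.hadamard X) + 1 - Matrix.diagonal x).det
          - s * t)
      ((n : ℝ) - (s : ℝ) -
        ((Real.exp ψ • (C.hadamard X) + 1 - Matrix.diagonal x)⁻¹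
          * (1 - Matrix.diagonal x)).trace) ψ := by
  have hF := posDef_smul_hadamard_add_one_sub_diagonal hC hpsd hdiag (Real.exp_pos ψ)
  have hlogdet := hasDerivAt_log_det_exp_smul_add hF.det_pos.ne'
  simp_rw [add_sub_assoc]
  rw [Fintype.card_fin] at hlogdet
  exact (hlogdet.sub ((hasDerivAt_id' ψ).const_mul (s : ℝ))).congr_deriv (by ring)

/-- With `F(ψ) = e^ψ (C ∘ X) + I - diag(x)` and
`φ(ψ) = log det F(ψ) - s ψ`, the function `φ` is differentiable at every
`ψ ∈ ℝ` with `φ'(ψ) = n - s - trace(F(ψ)⁻¹ (I - diag(x)))`. -/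
theorem stmt_11 (n : ℕ) (C : Matrix (Fin n) (Fin n) ℝ) (hC : C.PosDef)
    (s : ℕ) (hs1 : 1 ≤ s) (hs2 : s ≤ n)
    (x : Fin n → ℝ) (X : Matrix (Fin n) (Fin n) ℝ) (hXs : X.IsSymm)
    (hpsd : (X - vecMulVec x x).PosSemidef) (hdiag : ∀ i, X i i = x i)
    (ψ : ℝ) :
    HasDerivAt (fun t : ℝ =>
        Real.log (Real.exp t • (C.hadamard X) + 1 - Matrix.diagonal x).det
          - s * t)
      ((n : ℝ) - (s : ℝ) -
        ((Real.exp ψ • (C.hadamard X) + 1 - Matrix.diagonal x)⁻¹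
          * (1 - Matrix.diagonal x)).trace) ψ :=
  stmt_11_general n C hC s x X hpsd hdiag ψ
end

section
/- Let C be an n×n real symmetric positive-definite matrix and let s be an integer with 1 ≤ s ≤ n. Then the function ψ ↦ sup { log det( e^ψ·C·diag(x)·C + I − diag(x) ) − s·ψ : x ∈ ℝⁿ, eᵀx = s, 0 ≤ x ≤ e } is convex on ℝ; moreover, for each fixed x ∈ ℝⁿ with 0 ≤ x ≤ e, the function ψ ↦ log det( e^ψ·C·diag(x)·C + I − diag(x) ) − s·ψ is convex on ℝ. -/
open Matrix

/-!
For fixed `x`, the matrices `A = C diag(x) C` and `B = I - diag(x)` are positive semidefinite.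
If `A + B = Rᴴ R` is nonsingular, the congruence by `R⁻¹` turns `t A + B` into `t H + (I - H)`
with `0 ≤ H ≤ I`, so `det (t A + B) = det (A + B) ∏ᵢ (dᵢ t + 1 - dᵢ)` with the eigenvalues
`dᵢ ∈ [0, 1]` of `H`, and `ψ ↦ log (dᵢ e^ψ + 1 - dᵢ)` is convex. If `A + B` is singular, `A` and `B`
share a kernel vector and `det (e^ψ A + B)` vanishes identically. The supremum over `x` of these
convex functions is finite, since `log det ≤ |det|` and `|det|` is continuous on the compact cube
`[0, 1]ⁿ`, and hence convex.
-/

theorem convexOn_finset_sum {𝕜 E β ι : Type*} [Semiring 𝕜] [PartialOrder 𝕜] [AddCommMonoid E]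
    [AddCommMonoid β] [PartialOrder β] [IsOrderedAddMonoid β] [SMul 𝕜 E] [Module 𝕜 β]
    {s : Set E} (hs : Convex 𝕜 s) {t : Finset ι} {f : ι → E → β}
    (hf : ∀ i ∈ t, ConvexOn 𝕜 s (f i)) : ConvexOn 𝕜 s (fun x => ∑ i ∈ t, f i x) := by
  induction t using Finset.cons_induction with
  | empty => simpa using convexOn_const 0 hs
  | cons i t hi ih =>
    simp only [Finset.sum_cons]
    exact (hf i (t.mem_cons_self i)).add (ih fun j hj => hf j (Finset.mem_cons_of_mem hj))

theorem convexOn_csSup_image {E ι : Type*} [AddCommMonoid E] [SMul ℝ E] {s : Set E}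
    {S : Set ι} {f : ι → E → ℝ} (hs : Convex ℝ s) (hS : S.Nonempty)
    (hf : ∀ i ∈ S, ConvexOn ℝ s (f i)) (hbdd : ∀ x ∈ s, BddAbove ((f · x) '' S)) :
    ConvexOn ℝ s (fun x => sSup ((f · x) '' S)) := by
  refine ⟨hs, fun x hx y hy a b ha hb hab => csSup_le (hS.image _) ?_⟩
  rintro _ ⟨i, hi, rfl⟩
  calc f i (a • x + b • y) ≤ a • f i x + b • f i y := (hf i hi).2 hx hy ha hb hab
    _ ≤ a • sSup ((f · x) '' S) + b • sSup ((f · y) '' S) := by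
      gcongr
      · exact le_csSup (hbdd x hx) ⟨i, hi, rfl⟩
      · exact le_csSup (hbdd y hy) ⟨i, hi, rfl⟩

namespace Real

theorem mul_exp_add_pos {a b : ℝ} (ha : 0 ≤ a) (hb : 0 ≤ b) (hab : 0 < a + b) (ψ : ℝ) :
    0 < a * exp ψ + b := by
  rcases ha.eq_or_lt with rfl | ha
  · simpa using hab
  · positivity

theorem convexOn_log_mul_exp_add {a b : ℝ} (ha : 0 ≤ a) (hb : 0 ≤ b) (hab : 0 < a + b) :
    ConvexOn ℝ Set.univ (fun ψ => log (a * exp ψ + b)) := by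
  have hpos := mul_exp_add_pos ha hb hab
  have hderiv : ∀ ψ, HasDerivAt (fun ψ => log (a * exp ψ + b))
      (a * exp ψ / (a * exp ψ + b)) ψ :=
    fun ψ => (((hasDerivAt_exp ψ).const_mul a).add_const b).log (hpos ψ).ne'
  refine Monotone.convexOn_univ_of_deriv (fun ψ => (hderiv ψ).differentiableAt) ?_
  rw [funext fun ψ => (hderiv ψ).deriv]
  intro x y hxy
  rw [div_le_div_iff₀ (hpos x) (hpos y)]
  nlinarith [exp_le_exp.2 hxy, mul_nonneg ha hb]

end Real

namespace Matrix

variable {ι : Type*} [Fintype ι] [DecidableEq ι]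

theorem IsHermitian.det_smul_add_one_sub {H : Matrix ι ι ℝ} (hH : H.IsHermitian) (t : ℝ) :
    (t • H + (1 - H)).det = ∏ i, (hH.eigenvalues i * t + (1 - hH.eigenvalues i)) := by
  conv_lhs => rw [hH.spectral_theorem]
  rw [← map_one (Unitary.conjStarAlgAut ℝ _ hH.eigenvectorUnitary), ← map_sub, ← map_smul,
    ← map_add, Unitary.conjStarAlgAut_apply, det_mul_comm, ← mul_assoc,
    Unitary.coe_star_mul_self, one_mul, ← diagonal_one, ← diagonal_smul, diagonal_sub,
    diagonal_add, det_diagonal]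
  simp [mul_comm]

theorem IsHermitian.eigenvalues_le_one {H : Matrix ι ι ℝ} (hH : H.IsHermitian)
    (h : (1 - H).PosSemidef) (i : ι) : hH.eigenvalues i ≤ 1 := by
  have hquad := h.dotProduct_mulVec_nonneg (hH.eigenvectorBasis i)
  have hnorm : star ⇑(hH.eigenvectorBasis i) ⬝ᵥ ⇑(hH.eigenvectorBasis i) = 1 := by
    rw [dotProduct_comm, ← EuclideanSpace.inner_eq_star_dotProduct]
    simp
  rw [sub_mulVec, one_mulVec, dotProduct_sub, hH.mulVec_eigenvectorBasis, dotProduct_smul,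
    hnorm] at hquad
  simpa using hquad

open scoped MatrixOrder in
theorem PosDef.exists_det_smul_add_eq_prod {A B : Matrix ι ι ℝ} (hA : A.PosSemidef)
    (hB : B.PosSemidef) (hAB : (A + B).PosDef) :
    ∃ d : ι → ℝ, (∀ i, 0 ≤ d i ∧ d i ≤ 1) ∧
      ∀ t : ℝ, (t • A + B).det = (A + B).det * ∏ i, (d i * t + (1 - d i)) := by
  obtain ⟨R, hR⟩ := CStarAlgebra.nonneg_iff_eq_star_mul_self.mp hAB.posSemidef.nonneg
  have hRu : IsUnit R := isUnit_of_mul_isUnit_right (hR ▸ hAB.isUnit)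
  set S := R⁻¹
  have hRS : R * S = 1 := mul_nonsing_inv R ((isUnit_iff_isUnit_det R).mp hRu)
  have hSR : S * R = 1 := nonsing_inv_mul R ((isUnit_iff_isUnit_det R).mp hRu)
  set H := star S * A * S
  have hH : H.PosSemidef := hA.conjTranspose_mul_mul_same S
  have h1H : 1 - H = star S * B * S := by
    have : star S * (A + B) * S = 1 := by
      rw [hR, ← mul_assoc, mul_assoc _ R, hRS, mul_one, ← star_mul, hRS, star_one]
    rw [← this, mul_add, add_mul, add_sub_cancel_left]
  have hconj : ∀ t : ℝ, t • A + B = star R * (t • H + (1 - H)) * R := by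
    intro t
    have : t • H + (1 - H) = star S * (t • A + B) * S := by
      rw [h1H, mul_add, add_mul, Matrix.mul_smul, Matrix.smul_mul]
    rw [this, ← mul_assoc, ← mul_assoc, ← star_mul, hSR, star_one, one_mul, mul_assoc, hSR,
      mul_one]
  refine ⟨hH.1.eigenvalues, fun i => ⟨hH.eigenvalues_nonneg i,
    hH.1.eigenvalues_le_one (h1H ▸ hB.conjTranspose_mul_mul_same S) i⟩, fun t => ?_⟩
  rw [hconj t, det_mul, det_mul, hH.1.det_smul_add_one_sub, hR, det_mul]
  ring

theorem PosSemidef.det_smul_add_eq_zero {A B : Matrix ι ι ℝ} (hA : A.PosSemidef)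
    (hB : B.PosSemidef) (hAB : ¬ (A + B).PosDef) (t : ℝ) : (t • A + B).det = 0 := by
  obtain ⟨v, hv, hABv⟩ : ∃ v ≠ 0, (A + B) *ᵥ v = 0 := by
    rw [(hA.add hB).posDef_iff_det_ne_zero, not_not] at hAB
    exact exists_mulVec_eq_zero_iff.mpr hAB
  have hsum : star v ⬝ᵥ A *ᵥ v + star v ⬝ᵥ B *ᵥ v = 0 := by
    rw [← dotProduct_add, ← add_mulVec, hABv, dotProduct_zero]
  have hAv := (hA.dotProduct_mulVec_zero_iff v).mp <| by
    linarith [hA.dotProduct_mulVec_nonneg v, hB.dotProduct_mulVec_nonneg v]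
  have hBv := (hB.dotProduct_mulVec_zero_iff v).mp <| by
    linarith [hA.dotProduct_mulVec_nonneg v, hB.dotProduct_mulVec_nonneg v]
  exact exists_mulVec_eq_zero_iff.mp
    ⟨v, hv, by rw [add_mulVec, smul_mulVec, hAv, hBv, smul_zero, add_zero]⟩

open Real in
theorem PosSemidef.convexOn_log_det_exp_smul_add {A B : Matrix ι ι ℝ} (hA : A.PosSemidef)
    (hB : B.PosSemidef) :
    ConvexOn ℝ Set.univ (fun ψ => log (exp ψ • A + B).det) := by
  by_cases hAB : (A + B).PosDef
  · obtain ⟨d, hd, hdet⟩ := hAB.exists_det_smul_add_eq_prod hA hB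
    have hd' : ∀ i, 0 ≤ 1 - d i := fun i => sub_nonneg.2 (hd i).2
    have hfac : ∀ ψ i, 0 < d i * exp ψ + (1 - d i) :=
      fun ψ i => mul_exp_add_pos (hd i).1 (hd' i) (by simp) ψ
    have hlog : (fun ψ => log (exp ψ • A + B).det) =
        (fun ψ => ∑ i, log (d i * exp ψ + (1 - d i))) + fun _ => log (A + B).det := by
      funext ψ
      rw [hdet, log_mul hAB.det_pos.ne' (Finset.prod_pos fun i _ => hfac ψ i).ne',
        log_prod fun i _ => (hfac ψ i).ne', add_comm]
      rfl
    rw [hlog]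
    exact (convexOn_finset_sum convex_univ fun i _ =>
      convexOn_log_mul_exp_add (hd i).1 (hd' i) (by simp)).add_const _
  · simp only [hA.det_smul_add_eq_zero hB hAB, log_zero]
    exact convexOn_const 0 convex_univ

end Matrix

open Real

section linx

variable {ι : Type*} [Fintype ι] [DecidableEq ι]

noncomputable def linxObjective (C : Matrix ι ι ℝ) (s : ℕ) (x : ι → ℝ) (ψ : ℝ) : ℝ :=
  log (exp ψ • (C * diagonal x * C) + 1 - diagonal x).det - s * ψ

theorem convexOn_linxObjective {C : Matrix ι ι ℝ} (hC : C.IsHermitian) (s : ℕ) {x : ι → ℝ}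
    (hx : x ∈ Set.Icc 0 1) : ConvexOn ℝ Set.univ (linxObjective C s x) := by
  have hA : (C * diagonal x * C).PosSemidef := by
    simpa only [hC.eq] using (PosSemidef.diagonal hx.1).conjTranspose_mul_mul_same C
  have hB : (1 - diagonal x : Matrix ι ι ℝ).PosSemidef := by
    rw [← diagonal_one, diagonal_sub]
    exact PosSemidef.diagonal (sub_nonneg.2 hx.2)
  have hobj : linxObjective C s x =
      fun ψ => log (exp ψ • (C * diagonal x * C) + (1 - diagonal x)).det - s * ψ := by
    funext ψ
    rw [linxObjective, add_sub_assoc]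
  rw [hobj]
  exact (hA.convexOn_log_det_exp_smul_add hB).sub
    ((concaveOn_id convex_univ).smul (Nat.cast_nonneg s))

theorem bddAbove_linxObjective_image (C : Matrix ι ι ℝ) (s : ℕ) (ψ : ℝ) :
    BddAbove ((linxObjective C s · ψ) '' Set.Icc 0 1) := by
  have hcont : Continuous fun x : ι → ℝ =>
      |(exp ψ • (C * diagonal x * C) + 1 - diagonal x).det| := by
    fun_prop
  obtain ⟨M, hM⟩ := (isCompact_Icc.image hcont).bddAbove
  refine ⟨M - s * ψ, ?_⟩
  rintro _ ⟨x, hx, rfl⟩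
  have hdet := hM ⟨x, hx, rfl⟩
  have hlog := log_le_self (abs_nonneg (exp ψ • (C * diagonal x * C) + 1 - diagonal x).det)
  rw [log_abs] at hlog
  unfold linxObjective
  linarith

end linx

/-- The optimal linx bound, as a function of `ψ = log γ`,
`ψ ↦ sup { log det(e^ψ C diag(x) C + I - diag(x)) - s ψ : eᵀx = s, 0 ≤ x ≤ e }`,
is convex on `ℝ`; moreover, for each fixed `x` with `0 ≤ x ≤ e`, the function
`ψ ↦ log det(e^ψ C diag(x) C + I - diag(x)) - s ψ` is convex on `ℝ`. -/
theorem stmt_19 (n : ℕ) (C : Matrix (Fin n) (Fin n) ℝ) (hC : C.PosDef)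
    (s : ℕ) (hs1 : 1 ≤ s) (hs2 : s ≤ n) :
    ConvexOn ℝ Set.univ (fun ψ : ℝ =>
      sSup {r : ℝ | ∃ x : Fin n → ℝ, (∑ i, x i) = (s : ℝ) ∧
        (∀ i, 0 ≤ x i ∧ x i ≤ 1) ∧
        r = Real.log
            (Real.exp ψ • (C * Matrix.diagonal x * C) + 1 - Matrix.diagonal x).det
          - s * ψ})
    ∧ ∀ x : Fin n → ℝ, (∀ i, 0 ≤ x i ∧ x i ≤ 1) →
        ConvexOn ℝ Set.univ (fun ψ : ℝ =>
          Real.log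
            (Real.exp ψ • (C * Matrix.diagonal x * C) + 1 - Matrix.diagonal x).det
          - s * ψ) := by
  have hconv : ∀ x : Fin n → ℝ, (∀ i, 0 ≤ x i ∧ x i ≤ 1) →
      ConvexOn ℝ Set.univ (linxObjective C s x) := fun x hx =>
    convexOn_linxObjective hC.isHermitian s ⟨fun i => (hx i).1, fun i => (hx i).2⟩
  refine ⟨?_, hconv⟩
  set S : Set (Fin n → ℝ) := {x | ∑ i, x i = s ∧ ∀ i, 0 ≤ x i ∧ x i ≤ 1}
  have hn : (n : ℝ) ≠ 0 := Nat.cast_ne_zero.2 (by omega)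
  have hS : S.Nonempty := ⟨fun _ => s / n, by simp [mul_div_cancel₀ _ hn], fun _ =>
    ⟨by positivity, div_le_one_of_le₀ (by exact_mod_cast hs2) (Nat.cast_nonneg n)⟩⟩
  have hbdd : ∀ ψ ∈ Set.univ, BddAbove ((linxObjective C s · ψ) '' S) := fun ψ _ =>
    (bddAbove_linxObjective_image C s ψ).mono
      (Set.image_mono fun x hx => show x ∈ Set.Icc 0 1 from
        ⟨fun i => (hx.2 i).1, fun i => (hx.2 i).2⟩)
  convert convexOn_csSup_image convex_univ hS (fun x hx => hconv x hx.2) hbdd using 3 with ψ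
  ext r
  simp [S, linxObjective, eq_comm, and_assoc]
end
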